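/- The Cygan metric satisfies the triangle inequality: for all points p₁, p₂, p₃ in ℂ × ℝ × ℝ≥0, ρ(p₁, p₂) ≤ ρ(p₁, p₃) + ρ(p₃, p₂). -/

import Mathlib

open Complex

/-- The Cygan metric on `ℂ × ℝ × ℝ` (third coordinate is the height `u ≥ 0`). -/
noncomputable def cygan (p q : ℂ × ℝ × ℝ) : ℝ :=
  Real.sqrt (‖((((‖(p.1 - q.1)‖) ^ 2 + |p.2.2 - q.2.2| : ℝ) : ℂ)
      - Complex.I * (p.2.1 : ℂ) + Complex.I * (q.2.1 : ℂ)
      - 2 * Complex.I * (((p.1 * (starRingEnd ℂ) q.1).im : ℝ) : ℂ))‖)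

/-- Heisenberg group multiplication on `ℂ × ℝ`. -/
noncomputable def hmul (p q : ℂ × ℝ) : ℂ × ℝ :=
  (p.1 + q.1, p.2 + q.2 + 2 * ((starRingEnd ℂ) q.1 * p.1).im)

/-- The Korányi gauge on `ℂ × ℝ`. -/
noncomputable def hgauge (p : ℂ × ℝ) : ℝ :=
  Real.sqrt (‖((-((‖p.1‖) ^ 2 : ℝ) : ℂ) + Complex.I * (p.2 : ℂ))‖)

/-- The Heisenberg (Korányi–Cygan) metric on `ℂ × ℝ`. -/
noncomputable def hdist (p q : ℂ × ℝ) : ℝ :=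
  hgauge (hmul (-p.1, -p.2) q)

/-- Heisenberg inversion on `ℂ × ℝ`. -/
noncomputable def hinv (p : ℂ × ℝ) : ℂ × ℝ :=
  ((p.1 / ((-((‖p.1‖) ^ 2 : ℝ) : ℂ) + Complex.I * (p.2 : ℂ))),
    -p.2 / (‖((-((‖p.1‖) ^ 2 : ℝ) : ℂ) + Complex.I * (p.2 : ℂ))‖) ^ 2)

/-- Cygan inversion on `ℂ × ℝ × ℝ`. -/
noncomputable def cinv (p : ℂ × ℝ × ℝ) : ℂ × ℝ × ℝ :=
  (p.1 / ((-((‖p.1‖) ^ 2 : ℝ) : ℂ) + Complex.I * (p.2.1 : ℂ) - (p.2.2 : ℂ)),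
    -p.2.1 / (‖((-((‖p.1‖) ^ 2 : ℝ) : ℂ) + Complex.I * (p.2.1 : ℂ) - (p.2.2 : ℂ))‖) ^ 2,
    p.2.2 / (‖((-((‖p.1‖) ^ 2 : ℝ) : ℂ) + Complex.I * (p.2.1 : ℂ) - (p.2.2 : ℂ))‖) ^ 2)

/-! The Cygan metric is `ρ(p, q) = √‖A(p, q)‖` for the complex quantity `A = cyganForm`. Splitting
`A(p₁, p₂)` through `p₃` gives `A(p₁, p₃) + A(p₃, p₂)` plus the cross term `2 (ζ₁ - ζ₃) conj (ζ₃ - ζ₂)`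
and minus the defect `δ ≥ 0` of the triangle inequality for `|u₁ - u₂|`, which is at most twice
the smaller of `|u₁ - u₃|`, `|u₃ - u₂|`. Since `Re A(p, q) = |ζ - ζ'|² + |u - u'| ≤ ‖A(p, q)‖`,
Cauchy–Schwarz bounds the cross term plus `δ` by `2 √‖A(p₁, p₃)‖ √‖A(p₃, p₂)‖`, whence
`‖A(p₁, p₂)‖ ≤ (ρ(p₁, p₃) + ρ(p₃, p₂))²`. -/

open ComplexConjugate

lemma mul_add_mul_le_sqrt_mul_sqrt (a b c d : ℝ) :
    a * c + b * d ≤ √(a ^ 2 + b ^ 2) * √(c ^ 2 + d ^ 2) := by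
  rw [← Real.sqrt_mul (by positivity)]
  exact Real.le_sqrt_of_sq_le (by nlinarith [sq_nonneg (a * d - b * c)])

lemma min_le_sqrt_mul {s t : ℝ} (hs : 0 ≤ s) (ht : 0 ≤ t) : min s t ≤ √(s * t) :=
  Real.le_sqrt_of_sq_le <| by
    rw [sq]
    exact mul_le_mul (min_le_left s t) (min_le_right s t) (le_min hs ht) hs

lemma abs_abs_sub_sub_abs_sub_sub_abs_sub_le (a b c : ℝ) :
    |(|a - b| - |a - c| - |c - b|)| ≤ 2 * √(|a - c| * |c - b|) := by
  have hab := abs_sub_le a c b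
  have hac : |a - c| ≤ |a - b| + |c - b| := abs_sub_comm c b ▸ abs_sub_le a b c
  have hcb : |c - b| ≤ |a - c| + |a - b| := abs_sub_comm c a ▸ abs_sub_le c a b
  have hmin : |a - c| + |c - b| - |a - b| ≤ 2 * min |a - c| |c - b| := by
    rw [mul_min_of_nonneg _ _ zero_le_two]
    exact le_min (by linarith) (by linarith)
  rw [abs_of_nonpos (by linarith)]
  linarith [min_le_sqrt_mul (abs_nonneg (a - c)) (abs_nonneg (c - b))]

lemma sqrt_norm_add_add_mul_conj_add_ofReal_le {a b z w : ℂ} {s t r : ℝ} (hs : 0 ≤ s)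
    (ht : 0 ≤ t) (ha : ‖z‖ ^ 2 + s ≤ ‖a‖) (hb : ‖w‖ ^ 2 + t ≤ ‖b‖) (hr : |r| ≤ 2 * √(s * t)) :
    √‖a + b + 2 * z * conj w + r‖ ≤ √‖a‖ + √‖b‖ := by
  have hcross : ‖z‖ * ‖w‖ + √s * √t ≤ √‖a‖ * √‖b‖ :=
    calc ‖z‖ * ‖w‖ + √s * √t ≤ √(‖z‖ ^ 2 + √s ^ 2) * √(‖w‖ ^ 2 + √t ^ 2) :=
          mul_add_mul_le_sqrt_mul_sqrt _ _ _ _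
      _ = √(‖z‖ ^ 2 + s) * √(‖w‖ ^ 2 + t) := by rw [Real.sq_sqrt hs, Real.sq_sqrt ht]
      _ ≤ √‖a‖ * √‖b‖ := by gcongr
  have hnorm : ‖a + b + 2 * z * conj w + r‖ ≤ ‖a‖ + ‖b‖ + 2 * (‖z‖ * ‖w‖) + |r| :=
    calc ‖a + b + 2 * z * conj w + r‖ ≤ ‖a‖ + ‖b‖ + ‖2 * z * conj w‖ + ‖(r : ℂ)‖ :=
          norm_add₄_le
      _ = ‖a‖ + ‖b‖ + 2 * (‖z‖ * ‖w‖) + |r| := by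
          simp only [norm_mul, Complex.norm_conj, Complex.norm_real, Real.norm_eq_abs,
            Complex.norm_two]
          ring
  rw [Real.sqrt_le_left (by positivity), add_sq, Real.sq_sqrt (norm_nonneg a),
    Real.sq_sqrt (norm_nonneg b)]
  rw [Real.sqrt_mul hs] at hr
  linarith

noncomputable def cyganForm (p q : ℂ × ℝ × ℝ) : ℂ :=
  ((‖p.1 - q.1‖ ^ 2 + |p.2.2 - q.2.2| : ℝ) : ℂ) - I * p.2.1 + I * q.2.1
    - 2 * I * (p.1 * conj q.1).im

lemma cygan_eq_sqrt_norm_cyganForm (p q : ℂ × ℝ × ℝ) : cygan p q = √‖cyganForm p q‖ := rfl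

lemma cyganForm_re (p q : ℂ × ℝ × ℝ) :
    (cyganForm p q).re = ‖p.1 - q.1‖ ^ 2 + |p.2.2 - q.2.2| := by
  simp [cyganForm, sq]

lemma cyganForm_eq_add_add (p₁ p₂ p₃ : ℂ × ℝ × ℝ) :
    cyganForm p₁ p₂ = cyganForm p₁ p₃ + cyganForm p₃ p₂ + 2 * (p₁.1 - p₃.1) * conj (p₃.1 - p₂.1)
      + ((|p₁.2.2 - p₂.2.2| - |p₁.2.2 - p₃.2.2| - |p₃.2.2 - p₂.2.2| : ℝ) : ℂ) := by
  apply Complex.ext <;>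
  · simp only [cyganForm, Complex.sq_norm, normSq_apply, map_sub, conj_re, conj_im, ofReal_add,
      ofReal_sub, ofReal_mul, ofReal_neg, ofReal_re, ofReal_im, add_re, add_im, sub_re, sub_im,
      neg_re, neg_im, mul_re, mul_im, I_re, I_im, re_ofNat, im_ofNat, mul_neg, sub_neg_eq_add,
      mul_zero, zero_mul, mul_one, one_mul, add_zero, zero_add, sub_zero, zero_sub, sub_self,
      neg_zero]
    ring

theorem cygan_triangle_general (p₁ p₂ p₃ : ℂ × ℝ × ℝ) :
    cygan p₁ p₂ ≤ cygan p₁ p₃ + cygan p₃ p₂ := by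
  simp only [cygan_eq_sqrt_norm_cyganForm]
  rw [cyganForm_eq_add_add p₁ p₂ p₃]
  refine sqrt_norm_add_add_mul_conj_add_ofReal_le (abs_nonneg (p₁.2.2 - p₃.2.2))
    (abs_nonneg (p₃.2.2 - p₂.2.2)) ?_ ?_
    (abs_abs_sub_sub_abs_sub_sub_abs_sub_le p₁.2.2 p₂.2.2 p₃.2.2)
  all_goals rw [← cyganForm_re]; exact Complex.re_le_norm _

theorem cygan_triangle (p₁ p₂ p₃ : ℂ × ℝ × ℝ)
    (h1 : 0 ≤ p₁.2.2) (h2 : 0 ≤ p₂.2.2) (h3 : 0 ≤ p₃.2.2) :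
    cygan p₁ p₂ ≤ cygan p₁ p₃ + cygan p₃ p₂ :=
  cygan_triangle_general p₁ p₂ p₃
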